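/- The linear map D^N on the (2k+1)-dimensional Heisenberg Lie algebra h_{2k+1} defined by D^N(v) = ((k+1)/(k+2)) v for v in the span of the generators y₁,…,y_{2k} and D^N(z) = 2(k+1)/(k+2) z for z in the center, is a derivation satisfying trace(D^N ∘ F) = trace(F) for every derivation F of h_{2k+1}; i.e., it is a Nikolayevsky derivation of h_{2k+1}. -/

import Mathlib

/-- Brackets of basis vectors of the Heisenberg algebra `h_{2k+1}`:
`[y_i, y_{k+i}] = z` for `i = 1,…,k`, where `y₁,…,y_{2k}` are the first `2k`
coordinate vectors and `z = Pi.single (Fin.last (2*k)) 1` is the last one. -/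
noncomputable def scH (k : ℕ) (i j : Fin (2*k+1)) : Fin (2*k+1) → ℝ :=
  if (i : ℕ) < k ∧ (j : ℕ) = k + (i : ℕ)
  then (Pi.single (Fin.last (2*k)) 1 : Fin (2*k+1) → ℝ) else 0

/-- Skew-symmetrized structure constants of `h_{2k+1}`. -/
noncomputable def bbH (k : ℕ) (i j : Fin (2*k+1)) : Fin (2*k+1) → ℝ :=
  scH k i j - scH k j i

/-- The Heisenberg bracket on `ℝ^{2k+1}`. -/
noncomputable def brH (k : ℕ) (u v : Fin (2*k+1) → ℝ) : Fin (2*k+1) → ℝ :=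
  ∑ i : Fin (2*k+1), ∑ j : Fin (2*k+1), (u i * v j) • bbH k i j

/-- The candidate Nikolayevsky derivation of `h_{2k+1}`: multiplication by
`(k+1)/(k+2)` on the span of the generators and by `2(k+1)/(k+2)` on the center. -/
noncomputable def dNH (k : ℕ) : (Fin (2*k+1) → ℝ) →ₗ[ℝ] (Fin (2*k+1) → ℝ) :=
  LinearMap.pi fun i =>
    (if (i : ℕ) < 2*k then ((k : ℝ)+1)/((k : ℝ)+2) else 2*((k : ℝ)+1)/((k : ℝ)+2)) •
      LinearMap.proj i

/-!
The bracket is `[u, v] = ω(u, v) z` for the standard symplectic form `ω` on the first `2k`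
coordinates. `Dᴺ` scales `ω` by `c = (k+1)/(k+2)` in each argument and `z` by `2c`, so it is a
derivation. If `F` is a derivation, the `z`-coordinate of
`F z = [F y_m, y_{k+m}] + [y_m, F y_{k+m}]` gives `F_zz = F_mm + F_{k+m,k+m}`, so summing over
the `k` symplectic pairs yields `tr F = (k+1) F_zz`, while
`tr(Dᴺ F) = c tr F + c F_zz = c (k+2) F_zz`.
-/

open Finset

theorem Finset.sum_range_two_mul_of_add_eq {M : Type*} [AddCommMonoid M] (d : ℕ → M) (t : M)
    (k : ℕ) (h : ∀ m < k, d m + d (k + m) = t) :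
    ∑ m ∈ range (2 * k), d m = k • t := by
  rw [two_mul, sum_range_add, ← sum_add_distrib,
    sum_congr rfl fun m hm => h m (mem_range.mp hm), sum_const, card_range]

theorem LinearMap.trace_eq_sum_toMatrix'_diag {R ι : Type*} [CommRing R] [Fintype ι]
    [DecidableEq ι] (F : (ι → R) →ₗ[R] ι → R) :
    LinearMap.trace R _ F = ∑ i, LinearMap.toMatrix' F i i := by
  rw [← Matrix.toLin'_toMatrix' F, Matrix.trace_toLin'_eq, LinearMap.toMatrix'_toLin']
  rfl

namespace Heisenberg

variable (k : ℕ)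

/-- The `z`-coefficient of `[y_i, y_j]`. -/
noncomputable def symplCoeff (i j : Fin (2*k+1)) : ℝ :=
  (if (i : ℕ) < k ∧ (j : ℕ) = k + i then 1 else 0) -
  (if (j : ℕ) < k ∧ (i : ℕ) = k + j then 1 else 0)

noncomputable def symplForm (u v : Fin (2*k+1) → ℝ) : ℝ :=
  ∑ i, ∑ j, u i * v j * symplCoeff k i j

def IsDerivation (F : (Fin (2*k+1) → ℝ) →ₗ[ℝ] (Fin (2*k+1) → ℝ)) : Prop :=
  ∀ u v, F (brH k u v) = brH k (F u) v + brH k u (F v)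

noncomputable def nikScale : ℝ := ((k : ℝ) + 1) / ((k : ℝ) + 2)

theorem brH_eq_smul (u v : Fin (2*k+1) → ℝ) :
    brH k u v = symplForm k u v • Pi.single (Fin.last (2*k)) 1 := by
  have hbb : ∀ i j, bbH k i j = symplCoeff k i j • Pi.single (Fin.last (2*k)) 1 := by
    intro i j
    unfold bbH scH symplCoeff
    split_ifs <;> simp
  simp only [brH, symplForm, hbb, smul_smul, sum_smul]

variable {k}

theorem symplCoeff_swap (i j : Fin (2*k+1)) : symplCoeff k j i = -symplCoeff k i j := by
  unfold symplCoeff; ring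

theorem symplForm_swap (u v : Fin (2*k+1) → ℝ) : symplForm k v u = -symplForm k u v := by
  simp only [symplForm, ← sum_neg_distrib]
  rw [sum_comm]
  refine sum_congr rfl fun i _ => sum_congr rfl fun j _ => ?_
  rw [symplCoeff_swap]
  ring

theorem symplCoeff_eq_zero_of_le {i : Fin (2*k+1)} (hi : 2 * k ≤ i) (j : Fin (2*k+1)) :
    symplCoeff k i j = 0 := by
  unfold symplCoeff
  rw [if_neg (by omega), if_neg (by omega), sub_zero]

/-- `ω` only sees the first `2k` coordinates of its left argument. -/
theorem symplForm_of_eq_mul {c : ℝ} {u u' : Fin (2*k+1) → ℝ}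
    (h : ∀ i : Fin (2*k+1), (i : ℕ) < 2 * k → u' i = c * u i) (v : Fin (2*k+1) → ℝ) :
    symplForm k u' v = c * symplForm k u v := by
  simp only [symplForm, mul_sum]
  refine sum_congr rfl fun i _ => sum_congr rfl fun j _ => ?_
  by_cases hi : (i : ℕ) < 2 * k
  · rw [h i hi]; ring
  · rw [symplCoeff_eq_zero_of_le (by omega)]; ring

theorem symplCoeff_left_of_eq_add {p q : Fin (2*k+1)} (hp : (p : ℕ) < k)
    (hq : (q : ℕ) = k + p) (j : Fin (2*k+1)) : symplCoeff k p j = if j = q then 1 else 0 := by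
  unfold symplCoeff
  simp only [Fin.ext_iff]
  split_ifs <;> first | omega | norm_num

theorem symplCoeff_right_of_eq_add {p q : Fin (2*k+1)} (hp : (p : ℕ) < k)
    (hq : (q : ℕ) = k + p) (i : Fin (2*k+1)) : symplCoeff k i q = if i = p then 1 else 0 := by
  unfold symplCoeff
  simp only [Fin.ext_iff]
  split_ifs <;> first | omega | norm_num

theorem symplForm_single_left {p q : Fin (2*k+1)} (hp : (p : ℕ) < k) (hq : (q : ℕ) = k + p)
    (w : Fin (2*k+1) → ℝ) : symplForm k (Pi.single p 1) w = w q := by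
  simp [symplForm, Pi.single_apply, symplCoeff_left_of_eq_add hp hq]

theorem symplForm_single_right {p q : Fin (2*k+1)} (hp : (p : ℕ) < k) (hq : (q : ℕ) = k + p)
    (w : Fin (2*k+1) → ℝ) : symplForm k w (Pi.single q 1) = w p := by
  simp [symplForm, Pi.single_apply, symplCoeff_right_of_eq_add hp hq]

theorem dNH_apply (x : Fin (2*k+1) → ℝ) (i : Fin (2*k+1)) :
    dNH k x i = (if (i : ℕ) < 2 * k then nikScale k else 2 * nikScale k) * x i := by
  simp only [dNH, nikScale, LinearMap.pi_apply, mul_div_assoc]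
  split_ifs <;> simp

theorem symplForm_dNH_left (u v : Fin (2*k+1) → ℝ) :
    symplForm k (dNH k u) v = nikScale k * symplForm k u v :=
  symplForm_of_eq_mul (fun i hi => by rw [dNH_apply, if_pos hi]) v

theorem symplForm_dNH_right (u v : Fin (2*k+1) → ℝ) :
    symplForm k u (dNH k v) = nikScale k * symplForm k u v := by
  rw [symplForm_swap, symplForm_dNH_left, symplForm_swap v u]
  ring

theorem dNH_single_last :
    dNH k (Pi.single (Fin.last (2*k)) 1) = (2 * nikScale k) • Pi.single (Fin.last (2*k)) 1 := by
  funext i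
  rw [dNH_apply, Pi.smul_apply, smul_eq_mul]
  by_cases hi : i = Fin.last (2*k)
  · subst hi; simp
  · rw [Pi.single_eq_of_ne hi, mul_zero, mul_zero]

theorem isDerivation_dNH : IsDerivation k (dNH k) := by
  intro u v
  rw [brH_eq_smul, brH_eq_smul, brH_eq_smul, map_smul, dNH_single_last, symplForm_dNH_left,
    symplForm_dNH_right, smul_smul, ← add_smul]
  congr 1
  ring

theorem trace_dNH_comp (F : (Fin (2*k+1) → ℝ) →ₗ[ℝ] (Fin (2*k+1) → ℝ)) :
    LinearMap.trace ℝ _ (dNH k ∘ₗ F) = nikScale k * LinearMap.trace ℝ _ F +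
      nikScale k * LinearMap.toMatrix' F (Fin.last (2*k)) (Fin.last (2*k)) := by
  simp only [LinearMap.trace_eq_sum_toMatrix'_diag, Fin.sum_univ_castSucc,
    LinearMap.toMatrix'_apply, LinearMap.comp_apply, dNH_apply, Fin.val_castSucc, Fin.is_lt,
    if_pos, Fin.val_last, lt_irrefl, if_false]
  rw [← mul_sum]
  ring

theorem IsDerivation.toMatrix'_last {F : (Fin (2*k+1) → ℝ) →ₗ[ℝ] (Fin (2*k+1) → ℝ)}
    (hF : IsDerivation k F) {p q : Fin (2*k+1)} (hp : (p : ℕ) < k) (hq : (q : ℕ) = k + p) :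
    LinearMap.toMatrix' F (Fin.last (2*k)) (Fin.last (2*k)) =
      LinearMap.toMatrix' F p p + LinearMap.toMatrix' F q q := by
  have hz : brH k (Pi.single p 1) (Pi.single q 1) = Pi.single (Fin.last (2*k)) 1 := by
    rw [brH_eq_smul, symplForm_single_left hp hq, Pi.single_eq_same, one_smul]
  have h := congrFun (hF (Pi.single p 1) (Pi.single q 1)) (Fin.last (2*k))
  rw [hz, brH_eq_smul, brH_eq_smul, symplForm_single_left hp hq,
    symplForm_single_right hp hq] at h
  simpa [LinearMap.toMatrix'_apply] using h

open Fin.NatCast in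
theorem IsDerivation.trace_eq {F : (Fin (2*k+1) → ℝ) →ₗ[ℝ] (Fin (2*k+1) → ℝ)}
    (hF : IsDerivation k F) :
    LinearMap.trace ℝ _ F =
      (k + 1) * LinearMap.toMatrix' F (Fin.last (2*k)) (Fin.last (2*k)) := by
  set d : ℕ → ℝ := fun m => LinearMap.toMatrix' F m m
  have hpairs : ∀ m < k, d m + d (k + m) = d (2 * k) := by
    intro m hm
    have := hF.toMatrix'_last (p := (m : Fin (2*k+1))) (q := ((k + m : ℕ) : Fin (2*k+1)))
      (by rw [Fin.val_cast_of_lt (by omega)]; exact hm)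
      (by rw [Fin.val_cast_of_lt (by omega), Fin.val_cast_of_lt (by omega)])
    simp only [d, Fin.natCast_eq_last, this]
  have hlast : d (2 * k) = LinearMap.toMatrix' F (Fin.last (2*k)) (Fin.last (2*k)) := by
    simp only [d, Fin.natCast_eq_last]
  calc LinearMap.trace ℝ _ F = ∑ i : Fin (2*k+1), d i := by
        simp only [LinearMap.trace_eq_sum_toMatrix'_diag, d, Fin.cast_val_eq_self]
    _ = ∑ m ∈ range (2*k+1), d m := Fin.sum_univ_eq_sum_range d _
    _ = k * d (2*k) + d (2*k) := by
        rw [sum_range_succ, sum_range_two_mul_of_add_eq d _ k hpairs, nsmul_eq_mul]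
    _ = _ := by rw [hlast]; ring

end Heisenberg

theorem stmt12_general (k : ℕ) :
    (∀ u v : Fin (2*k+1) → ℝ,
        dNH k (brH k u v) = brH k (dNH k u) v + brH k u (dNH k v)) ∧
    (∀ F : (Fin (2*k+1) → ℝ) →ₗ[ℝ] (Fin (2*k+1) → ℝ),
        (∀ u v : Fin (2*k+1) → ℝ, F (brH k u v) = brH k (F u) v + brH k u (F v)) →
        LinearMap.trace ℝ _ (dNH k ∘ₗ F) = LinearMap.trace ℝ _ F) := by
  refine ⟨Heisenberg.isDerivation_dNH, fun F hF => ?_⟩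
  rw [Heisenberg.trace_dNH_comp, Heisenberg.IsDerivation.trace_eq hF, Heisenberg.nikScale]
  field_simp
  ring

/-- `dNH k` is a derivation of `h_{2k+1}` and satisfies `trace(Dᴺ ∘ F) = trace F`
for every derivation `F`, i.e. it is a Nikolayevsky derivation. -/
theorem stmt12 (k : ℕ) (hk : 1 ≤ k) :
    (∀ u v : Fin (2*k+1) → ℝ,
        dNH k (brH k u v) = brH k (dNH k u) v + brH k u (dNH k v)) ∧
    (∀ F : (Fin (2*k+1) → ℝ) →ₗ[ℝ] (Fin (2*k+1) → ℝ),
        (∀ u v : Fin (2*k+1) → ℝ, F (brH k u v) = brH k (F u) v + brH k u (F v)) →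
        LinearMap.trace ℝ _ (dNH k ∘ₗ F) = LinearMap.trace ℝ _ F) :=
  stmt12_general k
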